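/- (Dual projective Pythagoras' theorem) Suppose U, V, W are nonzero vectors with a_U, a_V, a_W all nonzero and with all three quantities a_U·a_V − b_{UV}², a_U·a_W − b_{UW}², a_V·a_W − b_{VW}² nonzero. If the projective quadrance q_w = q(U,V) equals 1, then the projective spreads satisfy S_w = S_u + S_v − S_u·S_v. -/
import Mathlib


/-- The projective quadrance between the projective points `[U]` and `[V]`. -/
def projQuadrance {F : Type*} [Field F] {M : Type*} [AddCommGroup M] [Module F M]
    (B : LinearMap.BilinForm F M) (U V : M) : F :=
  1 - (B U V) ^ 2 / (B U U * B V V)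

/-- The projective spread between the projective lines `WU` and `WV`
(the spread at the vertex `[W]`). -/
def projSpread {F : Type*} [Field F] {M : Type*} [AddCommGroup M] [Module F M]
    (B : LinearMap.BilinForm F M) (W U V : M) : F :=
  1 - (B W W * B U V - B U W * B V W) ^ 2 /
      ((B U U * B W W - (B U W) ^ 2) * (B V V * B W W - (B V W) ^ 2))

theorem dual_projective_pythagoras_theorem
    {F : Type*} [Field F] (hchar : (2 : F) ≠ 0)
    {M : Type*} [AddCommGroup M] [Module F M]
    (B : LinearMap.BilinForm F M) (hsym : ∀ x y : M, B x y = B y x)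
    (U V W : M) (hU : U ≠ 0) (hV : V ≠ 0) (hW : W ≠ 0)
    (haU : B U U ≠ 0) (haV : B V V ≠ 0) (haW : B W W ≠ 0)
    (hdUV : B U U * B V V - (B U V) ^ 2 ≠ 0)
    (hdUW : B U U * B W W - (B U W) ^ 2 ≠ 0)
    (hdVW : B V V * B W W - (B V W) ^ 2 ≠ 0)
    (hqw : projQuadrance B U V = 1) :
    projSpread B W U V =
      projSpread B U V W + projSpread B V U W -
        projSpread B U V W * projSpread B V U W := by
  have hUV : B U V = 0 := by
    have h := hqw
    unfold projQuadrance at h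
    have h0 : (B U V) ^ 2 / (B U U * B V V) = 0 := by linear_combination -h
    rcases div_eq_zero_iff.mp h0 with h2 | h2
    · exact pow_eq_zero_iff two_ne_zero |>.mp h2
    · exact absurd h2 (mul_ne_zero haU haV)
  unfold projSpread
  rw [hsym V U, hsym W U, hsym W V, hUV]
  have hdUV' : B V V * B U U - (B U V) ^ 2 ≠ 0 := by intro h; apply hdUV; rw [hUV] at h ⊢; linear_combination h
  have hdUW' : B W W * B U U - (B U W) ^ 2 ≠ 0 := by
    intro h; apply hdUW; linear_combination h
  have hdVW' : B W W * B V V - (B V W) ^ 2 ≠ 0 := by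
    intro h; apply hdVW; linear_combination h
  rw [hUV] at hdUV
  field_simp
  ring
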